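/- Assume that for every k ∈ {1,…,N} the spectral norm of H(k) satisfies ‖H(k)‖₂ = ρ(H(k)ᵀH(k))^{1/2} < 1. Then the game 𝒢 has exactly one Nash equilibrium p*, and for every starting point p^{(0)} ∈ 𝒫 the simultaneous IWFA sequence converges linearly to p*: there exist C ≥ 0 and β ∈ [0,1) with ‖p^{(n)} − p*‖₂ ≤ C·βⁿ for all n. -/

import Mathlib

open Finset
open scoped Classical

noncomputable section

/-- Squared Euclidean distance between two vectors of `ℝ^N`. -/
def dsq {N : ℕ} (x y : Fin N → ℝ) : ℝ := ∑ k, (x k - y k) ^ 2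

/-- The admissible strategy set with per-carrier caps `pmax`. -/
def stratSet {N : ℕ} (pmax : Fin N → ℝ) : Set (Fin N → ℝ) :=
  {p | (1 / (N : ℝ)) * ∑ k, p k = 1 ∧ ∀ k, 0 ≤ p k ∧ p k ≤ pmax k}

/-- `x` is a Euclidean projection of `z` onto `S` (a minimizer of the Euclidean distance). -/
def IsProjOn {N : ℕ} (S : Set (Fin N → ℝ)) (z x : Fin N → ℝ) : Prop :=
  x ∈ S ∧ ∀ y ∈ S, dsq x z ≤ dsq y z

/-- The interference-plus-noise-to-signal vector `insr_q(p_{-q})`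
(it only depends on the components `p r` for `r ≠ q`). -/
def insr {N Q : ℕ} (H : Fin Q → Fin Q → Fin N → ℝ) (Γ : Fin Q → ℝ)
    (q : Fin Q) (p : Fin Q → Fin N → ℝ) : Fin N → ℝ :=
  fun k => Γ q * (1 + ∑ r ∈ Finset.univ.erase q, H r q k * p r k) / H q q k

/-- `WF` is a waterfilling operator: whenever the other users' strategies are feasible,
`WF q p` is the Euclidean projection of `-insr_q(p_{-q})` onto user `q`'s strategy set. -/
def IsWF {N Q : ℕ} (H : Fin Q → Fin Q → Fin N → ℝ) (Γ : Fin Q → ℝ)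
    (pmax : Fin Q → Fin N → ℝ)
    (WF : Fin Q → (Fin Q → Fin N → ℝ) → Fin N → ℝ) : Prop :=
  ∀ q (p : Fin Q → Fin N → ℝ), (∀ r, r ≠ q → p r ∈ stratSet (pmax r)) →
    IsProjOn (stratSet (pmax q)) (fun k => -insr H Γ q p k) (WF q p)

/-- The rate `R_q(p)` of user `q`. -/
def rate {N Q : ℕ} (H : Fin Q → Fin Q → Fin N → ℝ) (Γ : Fin Q → ℝ)
    (q : Fin Q) (p : Fin Q → Fin N → ℝ) : ℝ :=
  (1 / (N : ℝ)) * ∑ k, Real.log (1 + H q q k * p q k /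
      (Γ q * (1 + ∑ r ∈ Finset.univ.erase q, H r q k * p r k)))

/-- `pstar` is a Nash equilibrium of the rate game `𝒢`. -/
def IsNE {N Q : ℕ} (H : Fin Q → Fin Q → Fin N → ℝ) (Γ : Fin Q → ℝ)
    (pmax : Fin Q → Fin N → ℝ) (pstar : Fin Q → Fin N → ℝ) : Prop :=
  (∀ q, pstar q ∈ stratSet (pmax q)) ∧
    ∀ q, ∀ x ∈ stratSet (pmax q),
      rate H Γ q (Function.update pstar q x) ≤ rate H Γ q pstar

/-- The set `D_q` of carriers that user `q` may use in some best response. -/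
def Dset {N Q : ℕ} (pmax : Fin Q → Fin N → ℝ)
    (WF : Fin Q → (Fin Q → Fin N → ℝ) → Fin N → ℝ) (q : Fin Q) : Set (Fin N) :=
  {k | ∃ p : Fin Q → Fin N → ℝ,
    (∀ r, r ≠ q → p r ∈ stratSet (pmax r)) ∧ WF q p k ≠ 0}

/-- `max_{k ∈ D_q ∩ D_r} |H_rq(k)|² / |H_qq(k)|²`, with the convention that it is `0`
when `D_q ∩ D_r = ∅` (via `Real.sSup_empty`). -/
def maxRatio {N Q : ℕ} (H : Fin Q → Fin Q → Fin N → ℝ) (pmax : Fin Q → Fin N → ℝ)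
    (WF : Fin Q → (Fin Q → Fin N → ℝ) → Fin N → ℝ) (q r : Fin Q) : ℝ :=
  sSup {x : ℝ | ∃ k : Fin N,
    (k ∈ Dset pmax WF q ∧ k ∈ Dset pmax WF r) ∧ x = H r q k / H q q k}

/-- The matrix `H^max`. -/
def Hmax {N Q : ℕ} (H : Fin Q → Fin Q → Fin N → ℝ) (Γ : Fin Q → ℝ)
    (pmax : Fin Q → Fin N → ℝ)
    (WF : Fin Q → (Fin Q → Fin N → ℝ) → Fin N → ℝ) : Matrix (Fin Q) (Fin Q) ℝ :=
  Matrix.of fun q r => if q = r then 0 else Γ q * maxRatio H pmax WF q r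

/-- The matrix `H(k)`. -/
def Hmat {N Q : ℕ} (H : Fin Q → Fin Q → Fin N → ℝ) (Γ : Fin Q → ℝ)
    (pmax : Fin Q → Fin N → ℝ)
    (WF : Fin Q → (Fin Q → Fin N → ℝ) → Fin N → ℝ) (k : Fin N) :
    Matrix (Fin Q) (Fin Q) ℝ :=
  Matrix.of fun q r =>
    if q ≠ r ∧ k ∈ Dset pmax WF q ∧ k ∈ Dset pmax WF r then
      Γ q * H r q k / H q q k
    else 0

/-- The spectral radius of a real square matrix: the maximum modulus of its complex
eigenvalues (the roots of its characteristic polynomial over `ℂ`). -/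
def specRad {n : ℕ} (A : Matrix (Fin n) (Fin n) ℝ) : ℝ :=
  sSup {x : ℝ | ∃ μ : ℂ,
    ((A.map (fun a => (a : ℂ))).charpoly).IsRoot μ ∧ x = ‖μ‖}

/-- The spectral norm `‖A‖₂ = ρ(AᵀA)^{1/2}` of a real square matrix. -/
def specNorm {n : ℕ} (A : Matrix (Fin n) (Fin n) ℝ) : ℝ :=
  Real.sqrt (specRad (A.transpose * A))

/-- Euclidean distance between strategy profiles, viewed as vectors of `ℝ^{QN}`. -/
def profDist {N Q : ℕ} (p p' : Fin Q → Fin N → ℝ) : ℝ :=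
  Real.sqrt (∑ q, ∑ k, (p q k - p' q k) ^ 2)

/-- The effective strategy set `𝒫_q^eff`. -/
def effSet {N Q : ℕ} (pmax : Fin Q → Fin N → ℝ)
    (WF : Fin Q → (Fin Q → Fin N → ℝ) → Fin N → ℝ) (q : Fin Q) : Set (Fin N → ℝ) :=
  {p | p ∈ stratSet (pmax q) ∧ ∀ k, k ∉ Dset pmax WF q → p k = 0}

/-- The gradient `∇_q R_q(p)` of the rate of user `q` with respect to its own powers. -/
def gradR {N Q : ℕ} (H : Fin Q → Fin Q → Fin N → ℝ) (Γ : Fin Q → ℝ)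
    (q : Fin Q) (p : Fin Q → Fin N → ℝ) : Fin N → ℝ :=
  fun k => (1 / (N : ℝ)) * H q q k /
    (Γ q * (1 + ∑ r ∈ Finset.univ.erase q, H r q k * p r k) + H q q k * p q k)

/-- `x` is a projection of `z` onto `S` with respect to the quadratic form of the
(symmetric positive definite) matrix `G`, i.e. a minimizer of `(x-z)ᵀ G (x-z)` over `S`. -/
def IsGProj {N : ℕ} (G : Matrix (Fin N) (Fin N) ℝ) (S : Set (Fin N → ℝ))
    (z x : Fin N → ℝ) : Prop :=
  x ∈ S ∧ ∀ y ∈ S,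
    dotProduct (fun i => x i - z i) (G.mulVec (fun i => x i - z i)) ≤
      dotProduct (fun i => y i - z i) (G.mulVec (fun i => y i - z i))

/-!
Best responses are waterfilling projections: the optimality conditions for maximizing
`∑ₖ log (1 + yₖ / σₖ)` and for projecting `-σ` onto the strategy set both say that the level
`σₖ + yₖ` is the same on all carriers in use and no lower on the carriers that are not full.
Hence the Nash equilibria are exactly the fixed points of the waterfilling map. Projections onto a
convex set are firmly nonexpansive, and on a carrier `k ∈ D_q` the difference of two interference
vectors of user `q` is the `q`-th entry of `H(k)` applied to the difference of the profiles, as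
long as both profiles vanish off the sets `D_r`. So on such profiles the waterfilling map is a
contraction with constant `maxₖ ‖H(k)‖₂ < 1`; every iterate after the first is such a profile,
and Banach's fixed-point theorem gives the unique equilibrium and the linear rate.
-/

section SeparableMax

variable {N : ℕ} {S : Set (Fin N → ℝ)} {φ : Fin N → ℝ → ℝ} {d x : Fin N → ℝ}

theorem sum_mul_sub_nonpos_of_isMaxOn (hS : Convex ℝ S) (hx : x ∈ S)
    (hφ : ∀ k, HasDerivAt (φ k) (d k) (x k)) (hmax : IsMaxOn (fun y => ∑ k, φ k (y k)) S x)
    {y : Fin N → ℝ} (hy : y ∈ S) : ∑ k, d k * (y k - x k) ≤ 0 := by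
  have hF : HasFDerivAt (fun y : Fin N → ℝ => ∑ k, φ k (y k))
      (∑ k, d k • ContinuousLinearMap.proj k) x :=
    HasFDerivAt.fun_sum fun k _ => (hφ k).comp_hasFDerivAt x (hasFDerivAt_apply (𝕜 := ℝ) k x)
  simpa using hmax.localize.hasFDerivWithinAt_nonpos hF.hasFDerivWithinAt
    (sub_mem_posTangentConeAt_of_segment_subset (hS.segment_subset hx hy))

theorem isMaxOn_iff_sum_mul_sub_nonpos (hS : Convex ℝ S) (hx : x ∈ S)
    (hφ : ∀ k, HasDerivAt (φ k) (d k) (x k))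
    (htan : ∀ y ∈ S, ∀ k, φ k (y k) ≤ φ k (x k) + d k * (y k - x k)) :
    IsMaxOn (fun y => ∑ k, φ k (y k)) S x ↔ ∀ y ∈ S, ∑ k, d k * (y k - x k) ≤ 0 := by
  refine ⟨fun hmax y hy => sum_mul_sub_nonpos_of_isMaxOn hS hx hφ hmax hy, fun hvi y hy => ?_⟩
  calc ∑ k, φ k (y k) ≤ ∑ k, (φ k (x k) + d k * (y k - x k)) := sum_le_sum fun k _ => htan y hy k
    _ = ∑ k, φ k (x k) + ∑ k, d k * (y k - x k) := sum_add_distrib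
    _ ≤ ∑ k, φ k (x k) := add_le_of_nonpos_right (hvi y hy)

end SeparableMax

theorem sum_sq_le_sum_sq_of_sum_sq_le_sum_mul {ι : Type*} {s : Finset ι} {a b : ι → ℝ}
    (h : ∑ i ∈ s, a i ^ 2 ≤ ∑ i ∈ s, a i * b i) : ∑ i ∈ s, a i ^ 2 ≤ ∑ i ∈ s, b i ^ 2 := by
  have hcs := sum_mul_sq_le_sq_mul_sq s a b
  have ha : 0 ≤ ∑ i ∈ s, a i ^ 2 := sum_nonneg fun i _ => sq_nonneg _
  have hb : 0 ≤ ∑ i ∈ s, b i ^ 2 := sum_nonneg fun i _ => sq_nonneg _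
  nlinarith

theorem exists_isFixedPt_of_dist_le {α : Type*} [MetricSpace α] {s : Set α} (hs : IsComplete s)
    (hne : s.Nonempty) {f : α → α} (hf : Set.MapsTo f s s) {K : NNReal} (hK : K < 1)
    (hfK : ∀ x ∈ s, ∀ y ∈ s, dist (f x) (f y) ≤ K * dist x y) :
    ∃ x ∈ s, Function.IsFixedPt f x := by
  obtain ⟨x, hx⟩ := hne
  have hc : ContractingWith K (hf.restrict f s s) :=
    ⟨hK, LipschitzWith.of_dist_le_mul fun a b => hfK a a.2 b b.2⟩
  obtain ⟨y, hy, hfix, -⟩ := hc.exists_fixedPoint' hs hf hx (edist_ne_top _ _)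
  exact ⟨y, hy, hfix⟩

theorem le_mul_pow_of_forall_le_mul {d : ℕ → ℝ} {K : ℝ} (hK : 0 < K) (hd0 : ∀ n, 0 ≤ d n)
    (hd : ∀ n, d (n + 2) ≤ K * d (n + 1)) : ∀ n, d n ≤ (d 0 + d 1 / K) * K ^ n := by
  have hsucc : ∀ m, d (m + 1) ≤ d 1 * K ^ m := fun m => by
    induction m with
    | zero => simp
    | succ m ih => calc d (m + 2) ≤ K * d (m + 1) := hd m
        _ ≤ K * (d 1 * K ^ m) := by gcongr
        _ = d 1 * K ^ (m + 1) := by ring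
  rintro (_ | m)
  · simpa using div_nonneg (hd0 1) hK.le
  · calc d (m + 1) ≤ d 1 / K * K ^ (m + 1) := by
          rw [pow_succ', ← mul_assoc, div_mul_cancel₀ _ hK.ne']
          exact hsucc m
      _ ≤ (d 0 + d 1 / K) * K ^ (m + 1) := by gcongr; linarith [hd0 0]

theorem exists_forall_le_of_forall_lt_one {ι : Type*} [Finite ι] {f : ι → ℝ}
    (hf : ∀ i, f i < 1) : ∃ K, 0 < K ∧ K < 1 ∧ ∀ i, f i ≤ K := by
  have hle : ∀ᶠ K in nhdsWithin (1 : ℝ) (Set.Iio 1), ∀ i, f i ≤ K :=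
    Filter.eventually_all.2 fun i =>
      Filter.mem_of_superset (Ioo_mem_nhdsLT (hf i)) fun _ h => h.1.le
  have hpos : ∀ᶠ K in nhdsWithin (1 : ℝ) (Set.Iio 1), K ∈ Set.Ioo 0 1 :=
    Ioo_mem_nhdsLT zero_lt_one
  obtain ⟨K, hK, hfK⟩ := (hpos.and hle).exists
  exact ⟨K, hK.1, hK.2, hfK⟩

section StratSet

variable {N : ℕ} {pm x y : Fin N → ℝ}

theorem convex_stratSet : Convex ℝ (stratSet pm) := by
  intro x hx y hy a b ha hb hab
  refine ⟨?_, fun k => ?_⟩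
  · simp only [Pi.add_apply, Pi.smul_apply, smul_eq_mul, sum_add_distrib, ← mul_sum]
    linear_combination a * hx.1 + b * hy.1 + hab
  · have := hx.2 k; have := hy.2 k
    simp only [Pi.add_apply, Pi.smul_apply, smul_eq_mul]
    constructor <;> nlinarith

theorem isClosed_stratSet : IsClosed (stratSet pm) := by
  simp only [stratSet, Set.ofPred_and, Set.ofPred_forall]
  exact (isClosed_eq (by fun_prop) continuous_const).inter <| isClosed_iInter fun k =>
    (isClosed_le continuous_const (continuous_apply k)).inter
      (isClosed_le (continuous_apply k) continuous_const)

theorem stratSet_nonempty (hpm : ∀ k, 0 ≤ pm k) (hcap : 1 < (1 / (N : ℝ)) * ∑ k, pm k) :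
    (stratSet pm).Nonempty := by
  set s := (1 / (N : ℝ)) * ∑ k, pm k
  have hs : 0 < s := by linarith
  refine ⟨fun k => pm k / s, ?_, fun k => ⟨div_nonneg (hpm k) hs.le, ?_⟩⟩
  · rw [← sum_div, ← mul_div_assoc, div_self hs.ne']
  · exact div_le_self (hpm k) hcap.le

theorem pos_of_mem_stratSet (hx : x ∈ stratSet pm) : 0 < N := by
  rcases Nat.eq_zero_or_pos N with rfl | hN
  · simpa using hx.1
  · exact hN

theorem sum_eq_sum_of_mem_stratSet (hx : x ∈ stratSet pm) (hy : y ∈ stratSet pm) :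
    ∑ k, x k = ∑ k, y k := by
  have hN : (0 : ℝ) < 1 / N := by simpa using pos_of_mem_stratSet hx
  exact mul_left_cancel₀ hN.ne' (hx.1.trans hy.1.symm)

theorem exists_pos_of_mem_stratSet (hx : x ∈ stratSet pm) : ∃ j, 0 < x j := by
  by_contra! h
  have : ∑ k, x k = 0 := sum_eq_zero fun k _ => le_antisymm (h k) (hx.2 k).1
  simpa [this] using hx.1

end StratSet

section StratSetVI

variable {N : ℕ} {pm x : Fin N → ℝ}

theorem le_of_forall_sum_mul_sub_nonpos {a : Fin N → ℝ} (hx : x ∈ stratSet pm)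
    (hvi : ∀ y ∈ stratSet pm, ∑ k, a k * (y k - x k) ≤ 0) {k j : Fin N}
    (hk : x k < pm k) (hj : 0 < x j) : a k ≤ a j := by
  obtain rfl | hkj := eq_or_ne k j
  · rfl
  set t := min (pm k - x k) (x j)
  have ht : 0 < t := lt_min (sub_pos.2 hk) hj
  have htk : t ≤ pm k - x k := min_le_left _ _
  have htj : t ≤ x j := min_le_right _ _
  set y := x + Pi.single k t - Pi.single j t
  have hyi : ∀ i, y i = x i + (if i = k then t else 0) - (if i = j then t else 0) := by
    simp [y, Pi.single_apply]
  have hy : y ∈ stratSet pm := by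
    refine ⟨by simpa [y, sum_add_distrib, sum_sub_distrib] using hx.1, fun i => ?_⟩
    have := hx.2 i
    rw [hyi]
    split_ifs with hik hij hij <;> subst_vars
    · exact absurd rfl hkj
    all_goals constructor <;> linarith
  have hsum : ∑ i, a i * (y i - x i) = t * (a k - a j) := by
    simp [hyi, mul_sub, mul_add, sum_sub_distrib, sum_add_distrib]
    ring
  nlinarith [hvi y hy]

theorem forall_sum_mul_sub_nonpos_of_le {a : Fin N → ℝ} (hx : x ∈ stratSet pm)
    (hle : ∀ k j, x k < pm k → 0 < x j → a k ≤ a j) {y : Fin N → ℝ} (hy : y ∈ stratSet pm) :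
    ∑ k, a k * (y k - x k) ≤ 0 := by
  obtain ⟨j₀, hj₀⟩ := exists_pos_of_mem_stratSet hx
  have hne : (univ.filter fun j => 0 < x j).Nonempty := ⟨j₀, by simpa using hj₀⟩
  set μ := (univ.filter fun j => 0 < x j).inf' hne a
  -- `∑ y = ∑ x`, so the weights may be lowered by the level `μ` of the carriers in use
  have hsum : ∑ k, a k * (y k - x k) = ∑ k, (a k - μ) * (y k - x k) := by
    simp only [sub_mul, sum_sub_distrib, ← mul_sum, sum_eq_sum_of_mem_stratSet hy hx, sub_self,
      mul_zero, sub_zero]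
  rw [hsum]
  refine sum_nonpos fun k _ => ?_
  rcases lt_trichotomy (y k) (x k) with h | h | h
  · have hxk : 0 < x k := (hy.2 k).1.trans_lt h
    have : μ ≤ a k := inf'_le a (by simpa using hxk)
    nlinarith
  · simp [h]
  · have hxk : x k < pm k := h.trans_le (hy.2 k).2
    have : a k ≤ μ := le_inf' hne a fun j hj => hle k j hxk (by simpa using hj)
    nlinarith

theorem forall_sum_mul_sub_nonpos_congr {a b : Fin N → ℝ} (hx : x ∈ stratSet pm)
    (hab : ∀ k j, a k ≤ a j ↔ b k ≤ b j) :
    (∀ y ∈ stratSet pm, ∑ k, a k * (y k - x k) ≤ 0) ↔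
      ∀ y ∈ stratSet pm, ∑ k, b k * (y k - x k) ≤ 0 :=
  ⟨fun h _ => forall_sum_mul_sub_nonpos_of_le hx fun _ _ hk hj =>
      (hab _ _).1 (le_of_forall_sum_mul_sub_nonpos hx h hk hj),
    fun h _ => forall_sum_mul_sub_nonpos_of_le hx fun _ _ hk hj =>
      (hab _ _).2 (le_of_forall_sum_mul_sub_nonpos hx h hk hj)⟩

end StratSetVI

section Projection

variable {N : ℕ} {S : Set (Fin N → ℝ)} {z z' x x' : Fin N → ℝ}

theorem isProjOn_iff (hS : Convex ℝ S) :
    IsProjOn S z x ↔ x ∈ S ∧ ∀ y ∈ S, ∑ k, (z k - x k) * (y k - x k) ≤ 0 := by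
  refine and_congr_right fun hx => ?_
  have hderiv : ∀ k, HasDerivAt (fun t => -(t - z k) ^ 2) (2 * (z k - x k)) (x k) := fun k =>
    (((hasDerivAt_id' (x k)).sub_const (z k)).fun_pow 2).fun_neg.congr_deriv (by ring)
  have hmax := isMaxOn_iff_sum_mul_sub_nonpos hS hx hderiv fun y _ k => by
    nlinarith [sq_nonneg (y k - x k)]
  simp only [isMaxOn_iff, sum_neg_distrib, neg_le_neg_iff, mul_assoc, ← mul_sum] at hmax
  simp only [dsq, hmax]
  exact forall₂_congr fun y _ => by constructor <;> intro h <;> linarith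

theorem IsProjOn.sum_sq_sub_le (hS : Convex ℝ S) (h : IsProjOn S z x) (h' : IsProjOn S z' x') :
    ∑ k, (x k - x' k) ^ 2 ≤ ∑ k, (x k - x' k) * (z k - z' k) := by
  rw [isProjOn_iff hS] at h h'
  have hsum : ∑ k, ((x k - x' k) ^ 2 - (x k - x' k) * (z k - z' k))
      = ∑ k, ((z k - x k) * (x' k - x k) + (z' k - x' k) * (x k - x' k)) :=
    sum_congr rfl fun k _ => by ring
  rw [sum_sub_distrib, sum_add_distrib] at hsum
  linarith [h.2 x' h'.1, h'.2 x h.1]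

theorem IsProjOn.unique (hS : Convex ℝ S) (h : IsProjOn S z x) (h' : IsProjOn S z x') :
    x = x' := by
  have hle := h.sum_sq_sub_le hS h'
  simp only [sub_self, mul_zero, sum_const_zero] at hle
  funext k
  have := (sum_eq_zero_iff_of_nonneg fun k _ => sq_nonneg (x k - x' k)).1
    (le_antisymm hle (sum_nonneg fun k _ => sq_nonneg _)) k (mem_univ k)
  exact sub_eq_zero.1 (pow_eq_zero_iff two_ne_zero |>.1 this)

end Projection

section Waterfilling

open Real

variable {N : ℕ} {pm σ x : Fin N → ℝ} {c : ℝ}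

theorem hasDerivAt_mul_log_one_add_div {σ x : ℝ} (hσ : 0 < σ) (hx : 0 ≤ x) (c : ℝ) :
    HasDerivAt (fun t => c * log (1 + t / σ)) (c / (σ + x)) x := by
  have h1 : 1 + x / σ ≠ 0 := by positivity
  refine ((((hasDerivAt_id' x).div_const σ).const_add 1).log h1).const_mul c |>.congr_deriv ?_
  field_simp

theorem mul_log_one_add_div_le {σ x y : ℝ} (hσ : 0 < σ) (hx : 0 ≤ x) (hy : 0 ≤ y)
    (hc : 0 ≤ c) : c * log (1 + y / σ) ≤ c * log (1 + x / σ) + c / (σ + x) * (y - x) := by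
  have hlog : log (1 + y / σ) - log (1 + x / σ) ≤ (y - x) / (σ + x) := by
    rw [← log_div (by positivity) (by positivity)]
    calc _ ≤ (1 + y / σ) / (1 + x / σ) - 1 := log_le_sub_one_of_pos (by positivity)
      _ = (y - x) / (σ + x) := by field_simp; ring
  calc c * log (1 + y / σ) = c * log (1 + x / σ) + c * (log (1 + y / σ) - log (1 + x / σ)) := by
        ring
    _ ≤ c * log (1 + x / σ) + c * ((y - x) / (σ + x)) := by gcongr
    _ = c * log (1 + x / σ) + c / (σ + x) * (y - x) := by ring

theorem isMaxOn_sum_log_iff_isProjOn (hc : 0 < c) (hσ : ∀ k, 0 < σ k) (hx : x ∈ stratSet pm) :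
    IsMaxOn (fun y => ∑ k, c * log (1 + y k / σ k)) (stratSet pm) x ↔
      IsProjOn (stratSet pm) (fun k => -σ k) x := by
  rw [isMaxOn_iff_sum_mul_sub_nonpos convex_stratSet hx
      (fun k => hasDerivAt_mul_log_one_add_div (hσ k) (hx.2 k).1 c)
      (fun y hy k => mul_log_one_add_div_le (hσ k) (hx.2 k).1 (hy.2 k).1 hc.le),
    isProjOn_iff convex_stratSet, and_iff_right hx]
  refine forall_sum_mul_sub_nonpos_congr hx fun k j => ?_
  have := (hx.2 k).1; have := (hx.2 j).1; have := hσ k; have := hσ j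
  rw [div_le_div_iff_of_pos_left hc (by positivity) (by positivity)]
  constructor <;> intro h <;> linarith

end Waterfilling

section Spectral

open Polynomial Matrix

variable {n : ℕ}

theorem norm_le_specRad {A : Matrix (Fin n) (Fin n) ℝ} {μ : ℂ}
    (hμ : ((A.map (fun a => (a : ℂ))).charpoly).IsRoot μ) : ‖μ‖ ≤ specRad A := by
  refine le_csSup ?_ ⟨μ, hμ, rfl⟩
  have hfin := finite_setOfPred_isRoot (A.map (fun a => (a : ℂ))).charpoly_monic.ne_zero
  refine (hfin.image fun μ : ℂ => ‖μ‖).bddAbove.mono ?_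
  rintro _ ⟨μ, hμ, rfl⟩
  exact ⟨μ, hμ, rfl⟩

theorem Matrix.IsHermitian.eigenvalues_le_specRad {M : Matrix (Fin n) (Fin n) ℝ}
    (hM : M.IsHermitian) (i : Fin n) : hM.eigenvalues i ≤ specRad M := by
  have hroot : M.charpoly.IsRoot (hM.eigenvalues i) := by
    rw [hM.charpoly_eq, IsRoot, eval_prod]
    exact prod_eq_zero (mem_univ i) (by simp)
  have hrootC : ((M.map (fun a => (a : ℂ))).charpoly).IsRoot (hM.eigenvalues i : ℂ) := by
    rw [show (fun a : ℝ => (a : ℂ)) = algebraMap ℝ ℂ from rfl, charpoly_map]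
    exact hroot.map
  exact (le_abs_self _).trans (by simpa [Complex.norm_real] using norm_le_specRad hrootC)

theorem Matrix.IsHermitian.dotProduct_mulVec_le {ι : Type*} [Fintype ι] [DecidableEq ι]
    {M : Matrix ι ι ℝ} (hM : M.IsHermitian) {c : ℝ} (hc : ∀ i, hM.eigenvalues i ≤ c)
    (v : ι → ℝ) : v ⬝ᵥ (M *ᵥ v) ≤ c * (v ⬝ᵥ v) := by
  set b := hM.eigenvectorBasis
  have hparseval : ∀ w : ι → ℝ, w ⬝ᵥ v = ∑ i, (w ⬝ᵥ b i) * (b i ⬝ᵥ v) := fun w => by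
    simpa [EuclideanSpace.inner_eq_star_dotProduct, dotProduct_comm] using
      (b.sum_inner_mul_inner (WithLp.toLp 2 w) (WithLp.toLp 2 v)).symm
  have hsymm : ∀ i, (M *ᵥ v) ⬝ᵥ b i = hM.eigenvalues i * (v ⬝ᵥ b i) := fun i => by
    rw [dotProduct_comm, dotProduct_mulVec, ← mulVec_transpose,
      ← conjTranspose_eq_transpose_of_trivial, hM.eq, mulVec_eigenvectorBasis, smul_dotProduct,
      dotProduct_comm, smul_eq_mul]
  calc v ⬝ᵥ (M *ᵥ v) = ∑ i, hM.eigenvalues i * (v ⬝ᵥ b i) ^ 2 := by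
        rw [dotProduct_comm, hparseval]
        exact sum_congr rfl fun i _ => by rw [hsymm, dotProduct_comm (b i)]; ring
    _ ≤ ∑ i, c * (v ⬝ᵥ b i) ^ 2 := by gcongr with i; exact hc i
    _ = c * (v ⬝ᵥ v) := by
        rw [← mul_sum, hparseval]
        exact congrArg _ (sum_congr rfl fun i _ => by rw [dotProduct_comm (b i)]; ring)

theorem sum_sq_mulVec_le_specRad (A : Matrix (Fin n) (Fin n) ℝ) (v : Fin n → ℝ) :
    ∑ i, (A *ᵥ v) i ^ 2 ≤ specRad (Aᵀ * A) * ∑ i, v i ^ 2 := by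
  have hM : (Aᵀ * A).IsHermitian := by
    simpa [conjTranspose_eq_transpose_of_trivial] using isHermitian_conjTranspose_mul_self A
  have := hM.dotProduct_mulVec_le hM.eigenvalues_le_specRad v
  rw [← mulVec_mulVec, dotProduct_mulVec, vecMul_transpose] at this
  simpa [dotProduct, sq] using this

end Spectral

section Game

variable {N Q : ℕ} {H : Fin Q → Fin Q → Fin N → ℝ} {Γ : Fin Q → ℝ}
  {pmax : Fin Q → Fin N → ℝ} {WF : Fin Q → (Fin Q → Fin N → ℝ) → Fin N → ℝ}

theorem insr_pos (hH : ∀ r q k, 0 ≤ H r q k) (hHqq : ∀ q k, 0 < H q q k) (hΓ : ∀ q, 0 < Γ q)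
    {q : Fin Q} {p : Fin Q → Fin N → ℝ} (hp : ∀ r, r ≠ q → p r ∈ stratSet (pmax r))
    (k : Fin N) : 0 < insr H Γ q p k := by
  have : 0 ≤ ∑ r ∈ univ.erase q, H r q k * p r k := sum_nonneg fun r hr =>
    mul_nonneg (hH r q k) ((hp r (ne_of_mem_erase hr)).2 k).1
  unfold insr
  have := hΓ q; have := hHqq q k
  positivity

theorem rate_update_eq (q : Fin Q) (p : Fin Q → Fin N → ℝ) (y : Fin N → ℝ) :
    rate H Γ q (Function.update p q y) =
      ∑ k, (1 / (N : ℝ)) * Real.log (1 + y k / insr H Γ q p k) := by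
  have hother : ∀ k, ∑ r ∈ univ.erase q, H r q k * Function.update p q y r k =
      ∑ r ∈ univ.erase q, H r q k * p r k := fun k =>
    sum_congr rfl fun r hr => by rw [Function.update_of_ne (ne_of_mem_erase hr)]
  simp only [rate, insr, mul_sum, hother, Function.update_self, div_div_eq_mul_div, mul_comm (y _)]

theorem isNE_iff_forall_wf_eq (hH : ∀ r q k, 0 ≤ H r q k) (hHqq : ∀ q k, 0 < H q q k)
    (hΓ : ∀ q, 0 < Γ q) (hWF : IsWF H Γ pmax WF) {p : Fin Q → Fin N → ℝ}
    (hp : ∀ q, p q ∈ stratSet (pmax q)) : IsNE H Γ pmax p ↔ ∀ q, WF q p = p q := by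
  refine (and_iff_right hp).trans (forall_congr' fun q => ?_)
  have hpq : 0 < (1 : ℝ) / N := by simpa using pos_of_mem_stratSet (hp q)
  have hmax := isMaxOn_sum_log_iff_isProjOn hpq
    (insr_pos hH hHqq hΓ (q := q) fun r _ => hp r) (hp q)
  simp only [← rate_update_eq, Function.update_eq_self, isMaxOn_iff] at hmax
  rw [hmax]
  exact ⟨fun h => (hWF q p fun r _ => hp r).unique convex_stratSet h,
    fun h => h ▸ hWF q p fun r _ => hp r⟩

end Game

section Contraction

open Matrix

variable {N Q : ℕ} {H : Fin Q → Fin Q → Fin N → ℝ} {Γ : Fin Q → ℝ}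
  {pmax : Fin Q → Fin N → ℝ} {WF : Fin Q → (Fin Q → Fin N → ℝ) → Fin N → ℝ}

theorem wf_mem_effSet (hWF : IsWF H Γ pmax WF) {q : Fin Q} {p : Fin Q → Fin N → ℝ}
    (hp : ∀ r, r ≠ q → p r ∈ stratSet (pmax r)) : WF q p ∈ effSet pmax WF q :=
  ⟨(hWF q p hp).1, fun _ hk => by_contra fun h => hk ⟨p, hp, h⟩⟩

theorem insr_sub_insr_eq_mulVec {p p' : Fin Q → Fin N → ℝ}
    (hp : ∀ r, p r ∈ effSet pmax WF r) (hp' : ∀ r, p' r ∈ effSet pmax WF r) {q : Fin Q}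
    {k : Fin N} (hk : k ∈ Dset pmax WF q) :
    insr H Γ q p' k - insr H Γ q p k = (Hmat H Γ pmax WF k *ᵥ fun r => p' r k - p r k) q := by
  have hterm : ∀ r ∈ univ.erase q, Γ q * H r q k / H q q k * (p' r k - p r k) =
      Hmat H Γ pmax WF k q r * (p' r k - p r k) := fun r hr => by
    by_cases hkr : k ∈ Dset pmax WF r
    · simp [Hmat, (ne_of_mem_erase hr).symm, hk, hkr]
    · simp [(hp r).2 k hkr, (hp' r).2 k hkr]
  have hdiag : Hmat H Γ pmax WF k q q * (p' q k - p q k) = 0 := by simp [Hmat]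
  rw [mulVec, dotProduct,
    ← sum_erase (f := fun r => Hmat H Γ pmax WF k q r * (p' r k - p r k)) _ hdiag,
    ← sum_congr rfl hterm]
  simp only [insr]
  rw [← sub_div, ← mul_sub, add_sub_add_left_eq_sub, ← sum_sub_distrib, mul_sum, sum_div]
  exact sum_congr rfl fun r _ => by ring

theorem sum_sq_wf_sub_le (hWF : IsWF H Γ pmax WF) {p p' : Fin Q → Fin N → ℝ}
    (hp : ∀ r, p r ∈ effSet pmax WF r) (hp' : ∀ r, p' r ∈ effSet pmax WF r) (q : Fin Q) :
    ∑ k, (WF q p k - WF q p' k) ^ 2 ≤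
      ∑ k, (Hmat H Γ pmax WF k *ᵥ fun r => p' r k - p r k) q ^ 2 := by
  have hwf := wf_mem_effSet hWF (q := q) fun r _ => (hp r).1
  have hwf' := wf_mem_effSet hWF (q := q) fun r _ => (hp' r).1
  refine sum_sq_le_sum_sq_of_sum_sq_le_sum_mul <|
    ((hWF q p fun r _ => (hp r).1).sum_sq_sub_le convex_stratSet
      (hWF q p' fun r _ => (hp' r).1)).trans_eq (sum_congr rfl fun k _ => ?_)
  by_cases hk : k ∈ Dset pmax WF q
  · rw [← insr_sub_insr_eq_mulVec hp hp' hk]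
    ring
  · simp [hwf.2 k hk, hwf'.2 k hk]

theorem sum_sq_wf_sub_le_mul (hWF : IsWF H Γ pmax WF) {b : ℝ}
    (hb : ∀ k, specRad ((Hmat H Γ pmax WF k)ᵀ * Hmat H Γ pmax WF k) ≤ b)
    {p p' : Fin Q → Fin N → ℝ} (hp : ∀ r, p r ∈ effSet pmax WF r)
    (hp' : ∀ r, p' r ∈ effSet pmax WF r) :
    ∑ q, ∑ k, (WF q p k - WF q p' k) ^ 2 ≤ b * ∑ q, ∑ k, (p q k - p' q k) ^ 2 :=
  calc ∑ q, ∑ k, (WF q p k - WF q p' k) ^ 2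
      ≤ ∑ q, ∑ k, (Hmat H Γ pmax WF k *ᵥ fun r => p' r k - p r k) q ^ 2 :=
        sum_le_sum fun q _ => sum_sq_wf_sub_le hWF hp hp' q
    _ = ∑ k, ∑ q, (Hmat H Γ pmax WF k *ᵥ fun r => p' r k - p r k) q ^ 2 := sum_comm
    _ ≤ ∑ k, b * ∑ q, (p' q k - p q k) ^ 2 := sum_le_sum fun k _ =>
        (sum_sq_mulVec_le_specRad _ _).trans
          (mul_le_mul_of_nonneg_right (hb k) (sum_nonneg fun _ _ => sq_nonneg _))
    _ = b * ∑ q, ∑ k, (p q k - p' q k) ^ 2 := by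
        simp only [← mul_sum, sub_sq_comm (p' _ _)]
        rw [sum_comm]

theorem isClosed_effSet (q : Fin Q) : IsClosed (effSet pmax WF q) := by
  simp only [effSet, Set.ofPred_and, Set.ofPred_forall, Set.ofPred_mem_eq]
  exact isClosed_stratSet.inter <| isClosed_iInter fun k => isClosed_iInter fun _ =>
    isClosed_eq (continuous_apply k) continuous_const

theorem profDist_wf_le (hWF : IsWF H Γ pmax WF) {K : ℝ} (hK0 : 0 ≤ K)
    (hK : ∀ k, specNorm (Hmat H Γ pmax WF k) ≤ K) {p p' : Fin Q → Fin N → ℝ}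
    (hp : ∀ r, p r ∈ effSet pmax WF r) (hp' : ∀ r, p' r ∈ effSet pmax WF r) :
    profDist (fun q => WF q p) (fun q => WF q p') ≤ K * profDist p p' := by
  have hb : ∀ k, specRad ((Hmat H Γ pmax WF k)ᵀ * Hmat H Γ pmax WF k) ≤ K ^ 2 := fun k =>
    (Real.sqrt_le_left hK0).1 (hK k)
  rw [profDist, profDist, ← Real.sqrt_sq hK0, ← Real.sqrt_mul (sq_nonneg K)]
  exact Real.sqrt_le_sqrt (sum_sq_wf_sub_le_mul hWF hb hp hp')

end Contraction

section Profiles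

variable {N Q : ℕ}

def profileEquiv : (Fin Q → Fin N → ℝ) ≃ EuclideanSpace ℝ (Fin Q × Fin N) :=
  (Equiv.curry _ _ _).symm.trans (WithLp.equiv 2 _).symm

theorem profDist_eq_dist (p p' : Fin Q → Fin N → ℝ) :
    profDist p p' = dist (profileEquiv p) (profileEquiv p') := by
  simp [profDist, EuclideanSpace.dist_eq, Fintype.sum_prod_type, profileEquiv, Real.dist_eq]

theorem continuous_profileEquiv_symm :
    Continuous (profileEquiv (N := N) (Q := Q)).symm :=
  continuous_pi fun _ => continuous_pi fun _ => (PiLp.continuous_apply 2 _ _)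

theorem exists_fixedPoint_of_profDist_le {s : Set (Fin Q → Fin N → ℝ)} (hs : IsClosed s)
    (hne : s.Nonempty) {T : (Fin Q → Fin N → ℝ) → Fin Q → Fin N → ℝ} (hT : Set.MapsTo T s s)
    {K : ℝ} (hK0 : 0 ≤ K) (hK : K < 1)
    (hTK : ∀ p ∈ s, ∀ p' ∈ s, profDist (T p) (T p') ≤ K * profDist p p') :
    ∃ p ∈ s, T p = p := by
  obtain ⟨p₀, hp₀⟩ := hne
  obtain ⟨v, hv, hfix⟩ := exists_isFixedPt_of_dist_le (K := ⟨K, hK0⟩)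
    (f := profileEquiv ∘ T ∘ profileEquiv.symm)
    (hs.preimage continuous_profileEquiv_symm).isComplete ⟨profileEquiv p₀, by simpa using hp₀⟩
    (fun v hv => by simpa using hT hv) hK fun v hv w hw => by
      have := hTK _ hv _ hw
      rwa [profDist_eq_dist, profDist_eq_dist, Equiv.apply_symm_apply, Equiv.apply_symm_apply]
        at this
  refine ⟨profileEquiv.symm v, hv, ?_⟩
  simpa [Function.IsFixedPt, Equiv.eq_symm_apply] using hfix

theorem eq_of_profDist_le_mul {p p' : Fin Q → Fin N → ℝ} {K : ℝ} (hK : K < 1)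
    (h : profDist p p' ≤ K * profDist p p') : p = p' := by
  rw [profDist_eq_dist] at h
  have hd := dist_nonneg (x := profileEquiv p) (y := profileEquiv p')
  exact profileEquiv.injective (dist_le_zero.1 (by nlinarith))

theorem profDist_le_mul_pow {s : Set (Fin Q → Fin N → ℝ)}
    {T : (Fin Q → Fin N → ℝ) → Fin Q → Fin N → ℝ} {K : ℝ} (hK : 0 < K)
    (hTK : ∀ p ∈ s, ∀ p' ∈ s, profDist (T p) (T p') ≤ K * profDist p p')
    {pstar : Fin Q → Fin N → ℝ} (hpstar : pstar ∈ s) (hfix : T pstar = pstar)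
    {pseq : ℕ → Fin Q → Fin N → ℝ} (hstep : ∀ n, pseq (n + 1) = T (pseq n))
    (hs : ∀ n, pseq (n + 1) ∈ s) (n : ℕ) :
    profDist (pseq n) pstar ≤ (profDist (pseq 0) pstar + profDist (pseq 1) pstar / K) * K ^ n :=
  le_mul_pow_of_forall_le_mul (d := fun n => profDist (pseq n) pstar) hK
    (fun _ => Real.sqrt_nonneg _) (fun n =>
    calc profDist (pseq (n + 2)) pstar = profDist (T (pseq (n + 1))) (T pstar) := by
          rw [hstep (n + 1), hfix]
      _ ≤ K * profDist (pseq (n + 1)) pstar := hTK _ (hs n) _ hpstar) n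

end Profiles

theorem statement7_general {N Q : ℕ}
    (H : Fin Q → Fin Q → Fin N → ℝ) (Γ : Fin Q → ℝ) (pmax : Fin Q → Fin N → ℝ)
    (hH : ∀ r q k, 0 ≤ H r q k) (hHqq : ∀ q k, 0 < H q q k)
    (hΓ : ∀ q, 0 < Γ q) (hpmax : ∀ q k, 0 ≤ pmax q k)
    (hcap : ∀ q, 1 < (1 / (N : ℝ)) * ∑ k, pmax q k)
    (WF : Fin Q → (Fin Q → Fin N → ℝ) → Fin N → ℝ) (hWF : IsWF H Γ pmax WF)
    (hspec : ∀ k, specNorm (Hmat H Γ pmax WF k) < 1) :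
    ∃ pstar : Fin Q → Fin N → ℝ, IsNE H Γ pmax pstar ∧
      (∀ p', IsNE H Γ pmax p' → p' = pstar) ∧
      ∀ pseq : ℕ → Fin Q → Fin N → ℝ,
        (∀ q, pseq 0 q ∈ stratSet (pmax q)) →
        (∀ n q, pseq (n + 1) q = WF q (pseq n)) →
        ∃ C β : ℝ, 0 ≤ C ∧ 0 ≤ β ∧ β < 1 ∧
          ∀ n, profDist (pseq n) pstar ≤ C * β ^ n := by
  set T : (Fin Q → Fin N → ℝ) → Fin Q → Fin N → ℝ := fun p q => WF q p
  set Peff := Set.univ.pi (effSet pmax WF)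
  have hT : ∀ p, (∀ q, p q ∈ stratSet (pmax q)) → T p ∈ Peff := fun p hp q _ =>
    wf_mem_effSet hWF fun r _ => hp r
  have hNE : ∀ p, (∀ q, p q ∈ stratSet (pmax q)) → (IsNE H Γ pmax p ↔ T p = p) := fun p hp =>
    (isNE_iff_forall_wf_eq hH hHqq hΓ hWF hp).trans funext_iff.symm
  obtain ⟨K, hK0, hK1, hK⟩ := exists_forall_le_of_forall_lt_one hspec
  have hcontr : ∀ p ∈ Peff, ∀ p' ∈ Peff, profDist (T p) (T p') ≤ K * profDist p p' :=
    fun p hp p' hp' => profDist_wf_le hWF hK0.le hK (fun q => hp q trivial) fun q => hp' q trivial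
  choose p₀ hp₀ using fun q => stratSet_nonempty (hpmax q) (hcap q)
  obtain ⟨pstar, hpstar, hfix⟩ := exists_fixedPoint_of_profDist_le
    (isClosed_set_pi fun q _ => isClosed_effSet q) ⟨T p₀, hT p₀ hp₀⟩
    (fun p hp => hT p fun q => (hp q trivial).1) hK0.le hK1 hcontr
  refine ⟨pstar, (hNE pstar fun q => (hpstar q trivial).1).2 hfix, fun p' hp' => ?_,
    fun pseq h0 hstep => ?_⟩
  · have hfix' := (hNE p' hp'.1).1 hp'
    refine eq_of_profDist_le_mul hK1 ?_
    have := hcontr p' (hfix' ▸ hT p' hp'.1) pstar hpstar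
    rwa [hfix', hfix] at this
  · have hstep' : ∀ n, pseq (n + 1) = T (pseq n) := fun n => funext (hstep n)
    have hmem : ∀ n q, pseq n q ∈ stratSet (pmax q) := fun n => by
      induction n with
      | zero => exact h0
      | succ n ih => exact fun q => hstep' n ▸ (hT _ ih q trivial).1
    have hd : ∀ n, 0 ≤ profDist (pseq n) pstar := fun n => Real.sqrt_nonneg _
    exact ⟨_, K, add_nonneg (hd 0) (div_nonneg (hd 1) hK0.le), hK0.le, hK1,
      profDist_le_mul_pow hK0 hcontr hpstar hfix hstep' fun n => hstep' n ▸ hT _ (hmem n)⟩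

/-- If the spectral norm of `H(k)` is less than one for every carrier `k`,
then the game has a unique Nash equilibrium and the simultaneous IWFA converges linearly
to it from any feasible start. -/
theorem statement7 {N Q : ℕ} (hN : 1 ≤ N) (hQ : 2 ≤ Q)
    (H : Fin Q → Fin Q → Fin N → ℝ) (Γ : Fin Q → ℝ) (pmax : Fin Q → Fin N → ℝ)
    (hH : ∀ r q k, 0 ≤ H r q k) (hHqq : ∀ q k, 0 < H q q k)
    (hΓ : ∀ q, 0 < Γ q) (hpmax : ∀ q k, 0 ≤ pmax q k)
    (hcap : ∀ q, 1 < (1 / (N : ℝ)) * ∑ k, pmax q k)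
    (WF : Fin Q → (Fin Q → Fin N → ℝ) → Fin N → ℝ) (hWF : IsWF H Γ pmax WF)
    (hspec : ∀ k, specNorm (Hmat H Γ pmax WF k) < 1) :
    ∃ pstar : Fin Q → Fin N → ℝ, IsNE H Γ pmax pstar ∧
      (∀ p', IsNE H Γ pmax p' → p' = pstar) ∧
      ∀ pseq : ℕ → Fin Q → Fin N → ℝ,
        (∀ q, pseq 0 q ∈ stratSet (pmax q)) →
        (∀ n q, pseq (n + 1) q = WF q (pseq n)) →
        ∃ C β : ℝ, 0 ≤ C ∧ 0 ≤ β ∧ β < 1 ∧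
          ∀ n, profDist (pseq n) pstar ≤ C * β ^ n :=
  statement7_general H Γ pmax hH hHqq hΓ hpmax hcap WF hWF hspec
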